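/- For every fixed t ≥ 0, the sequence n ↦ K(t,n) + n·(m+1)/(m−μ+1) is monotonically increasing in n for n ≥ m; equivalently, K(t,n+1) − K(t,n) ≥ −(m+1)/(m−μ+1) for all n ≥ m. -/

import Mathlib

open Finset MeasureTheory intervalIntegral Real Filter

noncomputable section

/-- The CDF `F(k) = ∑_{j=1}^k f(j)` of the bundle-size pmf `f`. -/
def cdfF (f : ℕ → ℝ) (k : ℕ) : ℝ := ∑ j ∈ Finset.Icc 1 k, f j

/-- `R(t,n)`: the expected number of remaining packages at time `t` starting from `n`
packages on a line, given via its closed-form solution in terms of the constants `γ`. -/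
def Rfun (f : ℕ → ℝ) (γ : ℕ → ℕ → ℝ) (lam t : ℝ) (n : ℕ) : ℝ :=
  if 0 < cdfF f n then
    ∑ i ∈ Finset.Icc 1 n, γ n i * Real.exp (-(lam * ∑ j ∈ Finset.Icc 1 i, cdfF f j) * t)
  else (n : ℝ)

/-- `K(t,n) = n - R(t,n)`. -/
def Kfun (f : ℕ → ℝ) (γ : ℕ → ℕ → ℝ) (lam t : ℝ) (n : ℕ) : ℝ :=
  (n : ℝ) - Rfun f γ lam t n

/-- The mean `μ = ∑_{k=1}^m k f(k)` of the bundle-size distribution. -/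
def muF (f : ℕ → ℝ) (m : ℕ) : ℝ := ∑ k ∈ Finset.Icc 1 m, (k : ℝ) * f k

/-!
Differentiating the closed form shows that `R(·, n)` solves the triangular linear system
`∂ₜR(t, n) = -λ G(n) R(t, n) + 2λ ∑_{j=1}^n F(j) R(t, n-j)`, `R(0, n) = n`, with
`G(n) = ∑_{j=1}^n F(j)` (`cdfSum`); the recursion for `γ` is exactly what makes this hold.
Comparing with the equilibrium `b` of `u' = -λ G (u - b)` through the integrating factor
`exp (λ G t)`, strong induction on `n` gives `0 ≤ R(t, n) ≤ n`; the upper bound rests on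
Chebyshev's inequality `2 ∑_{j=1}^n F(j) (n - j) ≤ n G(n)` for the nondecreasing `F`.
Summation by parts turns the system for `D = R(·, n+1) - R(·, n)` into
`D' = -λ G(n+1) D - λ F(n+1) R(n) + 2λ ∑_{j=1}^{n+1} f(j) R(n+1-j)`, and
`∑ f(j) R(n+1-j) ≤ ∑ f(j) (n+1-j) ≤ G(n+1)`, so the same comparison gives `D ≤ 2`.
Hence `K(t, n+1) - K(t, n) ≥ -1 ≥ -(m+1)/(m-μ+1)`, as `0 ≤ μ ≤ m`.
-/

def cdfSum (f : ℕ → ℝ) (n : ℕ) : ℝ := ∑ j ∈ Icc 1 n, cdfF f j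

def GammaZeroCase (f : ℕ → ℝ) (γ : ℕ → ℕ → ℝ) : Prop :=
  ∀ n j : ℕ, cdfF f n = 0 → 1 ≤ j → j ≤ n → γ n j = 1

def GammaRecurrence (f : ℕ → ℝ) (γ : ℕ → ℕ → ℝ) : Prop :=
  ∀ n i : ℕ, 0 < cdfF f n → 1 ≤ i → i < n →
    γ n i = 2 * (∑ j ∈ Icc 1 (n - i), cdfF f j * γ (n - j) i) / (∑ k ∈ Icc (i + 1) n, cdfF f k)

def GammaDiagonal (f : ℕ → ℝ) (γ : ℕ → ℕ → ℝ) : Prop :=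
  ∀ n : ℕ, 0 < cdfF f n → γ n n = (n : ℝ) - ∑ i ∈ Icc 1 (n - 1), γ n i

lemma sum_Icc_one_eq_sum_range {M : Type*} [AddCommMonoid M] (g : ℕ → M) (n : ℕ) :
    ∑ j ∈ Icc 1 n, g j = ∑ j ∈ range n, g (j + 1) := by
  rw [range_eq_Ico, sum_Ico_add' g 0 n 1, zero_add, Ico_add_one_right_eq_Icc]

section Cdf

variable {f : ℕ → ℝ}

@[simp]
lemma cdfF_zero : cdfF f 0 = 0 := by simp [cdfF]

lemma cdfF_succ (k : ℕ) : cdfF f (k + 1) = cdfF f k + f (k + 1) :=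
  sum_Icc_succ_top (by omega) f

lemma cdfF_nonneg (hf : ∀ k, 0 ≤ f k) (k : ℕ) : 0 ≤ cdfF f k :=
  sum_nonneg fun j _ => hf j

lemma cdfF_mono (hf : ∀ k, 0 ≤ f k) : Monotone (cdfF f) :=
  monotone_nat_of_le_succ fun k => by rw [cdfF_succ]; linarith [hf (k + 1)]

lemma cdfF_eq_zero_of_le (hf : ∀ k, 0 ≤ f k) {n j : ℕ} (hn : cdfF f n = 0) (hj : j ≤ n) :
    cdfF f j = 0 :=
  le_antisymm (hn ▸ cdfF_mono hf hj) (cdfF_nonneg hf j)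

lemma cdfSum_succ (n : ℕ) : cdfSum f (n + 1) = cdfSum f n + cdfF f (n + 1) :=
  sum_Icc_succ_top (by omega) _

lemma cdfSum_sub_cdfSum {i n : ℕ} (hin : i ≤ n) :
    cdfSum f n - cdfSum f i = ∑ k ∈ Icc (i + 1) n, cdfF f k := by
  have h := sum_Ioc_consecutive (cdfF f) (Nat.zero_le i) hin
  simp only [← Icc_add_one_left_eq_Ioc, zero_add] at h
  rw [cdfSum, cdfSum, ← h, add_sub_cancel_left]

lemma cdfSum_eq_sum_mul (n : ℕ) : cdfSum f n = ∑ j ∈ Icc 1 n, f j * ((n : ℝ) + 1 - j) := by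
  induction n with
  | zero => simp [cdfSum]
  | succ n ih =>
    rw [cdfSum_succ, ih, cdfF_succ, cdfF, sum_Icc_succ_top (by omega : 1 ≤ n + 1), ← add_assoc,
      ← sum_add_distrib]
    push_cast
    rw [sum_congr rfl fun j _ => (by ring : f j * ((n : ℝ) + 1 - j) + f j
      = f j * ((n : ℝ) + 1 + 1 - j))]
    ring

lemma cdfSum_le_mul_cdfF (hf : ∀ k, 0 ≤ f k) (n : ℕ) : cdfSum f n ≤ n * cdfF f n := by
  have := sum_le_card_nsmul (Icc 1 n) (cdfF f) (cdfF f n)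
    fun j hj => cdfF_mono hf (mem_Icc.mp hj).2
  simpa [cdfSum] using this

lemma two_mul_sum_cdfF_mul_sub_le (hf : ∀ k, 0 ≤ f k) (n : ℕ) :
    2 * ∑ j ∈ Icc 1 n, cdfF f j * ((n : ℝ) - j) ≤ n * cdfSum f n := by
  induction n with
  | zero => simp
  | succ n ih =>
    have hsplit : ∑ j ∈ Icc 1 (n + 1), cdfF f j * ((↑(n + 1) : ℝ) - j)
        = ∑ j ∈ Icc 1 n, cdfF f j * ((n : ℝ) - j) + cdfSum f n := by
      rw [sum_Icc_succ_top (by omega), cdfSum, sub_self, mul_zero, add_zero, ← sum_add_distrib]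
      push_cast
      exact sum_congr rfl fun j _ => by ring
    have hG := cdfSum_le_mul_cdfF hf n
    have hF := cdfF_mono hf (Nat.le_succ n)
    rw [hsplit, cdfSum_succ]
    push_cast
    nlinarith [cdfF_nonneg hf (n + 1), cdfF_nonneg hf n]

end Cdf

section Ode

variable {f : ℕ → ℝ} {γ : ℕ → ℕ → ℝ} {lam : ℝ}

lemma Rfun_eq_sum (hf : ∀ k, 0 ≤ f k) (hzero : GammaZeroCase f γ) (t : ℝ) (n : ℕ) :
    Rfun f γ lam t n = ∑ i ∈ Icc 1 n, γ n i * exp (-(lam * cdfSum f i) * t) := by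
  unfold Rfun
  split_ifs with hpos
  · rfl
  · have hn : cdfF f n = 0 := le_antisymm (not_lt.mp hpos) (cdfF_nonneg hf n)
    have hterm : ∀ i ∈ Icc 1 n, γ n i * exp (-(lam * cdfSum f i) * t) = 1 := by
      intro i hi
      obtain ⟨hi1, hin⟩ := mem_Icc.mp hi
      have hG : cdfSum f i = 0 :=
        sum_eq_zero fun j hj => cdfF_eq_zero_of_le hf hn ((mem_Icc.mp hj).2.trans hin)
      simp [hzero n i hn hi1 hin, hG]
    rw [sum_congr rfl hterm]
    simp

lemma Rfun_time_zero (hdiag : GammaDiagonal f γ) (n : ℕ) : Rfun f γ lam 0 n = n := by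
  unfold Rfun
  split_ifs with hpos
  · have hn : n ≠ 0 := by rintro rfl; simp at hpos
    obtain ⟨k, rfl⟩ := Nat.exists_eq_add_one_of_ne_zero hn
    simp only [mul_zero, exp_zero, mul_one]
    rw [sum_Icc_succ_top (by omega), hdiag _ hpos, Nat.add_sub_cancel]
    ring
  · rfl

lemma cdfSum_sub_mul_gamma (hf : ∀ k, 0 ≤ f k) (hrec : GammaRecurrence f γ) {n i : ℕ}
    (hi : 1 ≤ i) (hin : i ≤ n) :
    (cdfSum f n - cdfSum f i) * γ n i = 2 * ∑ j ∈ Icc 1 (n - i), cdfF f j * γ (n - j) i := by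
  rcases hin.eq_or_lt with rfl | hlt
  · simp
  rw [cdfSum_sub_cdfSum hin]
  by_cases hpos : 0 < cdfF f n
  · have hden : 0 < ∑ k ∈ Icc (i + 1) n, cdfF f k :=
      hpos.trans_le <| single_le_sum (fun k _ => cdfF_nonneg hf k) (mem_Icc.mpr ⟨hlt, le_rfl⟩)
    rw [hrec n i hpos hi hlt]
    field_simp
  · have hn : cdfF f n = 0 := le_antisymm (not_lt.mp hpos) (cdfF_nonneg hf n)
    rw [sum_eq_zero fun k hk => cdfF_eq_zero_of_le hf hn (mem_Icc.mp hk).2,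
      sum_eq_zero fun j hj => by
        rw [cdfF_eq_zero_of_le hf hn (by have := mem_Icc.mp hj; omega), zero_mul]]
    simp

lemma hasDerivAt_Rfun (hf : ∀ k, 0 ≤ f k) (hzero : GammaZeroCase f γ)
    (hrec : GammaRecurrence f γ) (n : ℕ) (t : ℝ) :
    HasDerivAt (fun s => Rfun f γ lam s n)
      (-(lam * cdfSum f n) * Rfun f γ lam t n
        + 2 * lam * ∑ j ∈ Icc 1 n, cdfF f j * Rfun f γ lam t (n - j)) t := by
  have hexp : ∀ i, HasDerivAt (fun s => γ n i * exp (-(lam * cdfSum f i) * s))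
      (γ n i * (-(lam * cdfSum f i)) * exp (-(lam * cdfSum f i) * t)) t := fun i => by
    simpa [mul_comm, mul_assoc, mul_left_comm] using
      ((hasDerivAt_id t).const_mul (-(lam * cdfSum f i))).exp.const_mul (γ n i)
  rw [show (fun s => Rfun f γ lam s n) = _ from funext fun s => Rfun_eq_sum hf hzero s n]
  refine (HasDerivAt.fun_sum (u := Icc 1 n) fun i _ => hexp i).congr_deriv ?_
  simp only [Rfun_eq_sum hf hzero t, mul_sum]
  rw [sum_comm' (t' := Icc 1 n) (s' := fun i => Icc 1 (n - i)) fun j i => by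
    simp only [mem_Icc]; omega, ← sum_add_distrib]
  refine sum_congr rfl fun i hi => ?_
  obtain ⟨hi1, hin⟩ := mem_Icc.mp hi
  set e := exp (-(lam * cdfSum f i) * t)
  have hconv : ∑ j ∈ Icc 1 (n - i), 2 * lam * (cdfF f j * (γ (n - j) i * e))
      = lam * e * (2 * ∑ j ∈ Icc 1 (n - i), cdfF f j * γ (n - j) i) := by
    rw [mul_sum, mul_sum]
    exact sum_congr rfl fun _ _ => by ring
  rw [hconv, ← cdfSum_sub_mul_gamma hf hrec hi1 hin]
  ring

end Ode

lemma le_of_hasDerivAt_le_neg_mul_sub {u u' : ℝ → ℝ} {a b t : ℝ}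
    (hu : ∀ s, HasDerivAt u (u' s) s) (hu' : ∀ s, 0 < s → u' s ≤ -a * (u s - b))
    (h0 : u 0 ≤ b) (ht : 0 ≤ t) : u t ≤ b := by
  have hφ : ∀ s, HasDerivAt (fun s => exp (a * s) * (u s - b))
      (exp (a * s) * a * (u s - b) + exp (a * s) * u' s) s := fun s => by
    simpa using (((hasDerivAt_id s).const_mul a).exp).fun_mul ((hu s).sub_const b)
  have hanti : AntitoneOn (fun s => exp (a * s) * (u s - b)) (Set.Ici 0) :=
    antitoneOn_of_hasDerivWithinAt_nonpos (convex_Ici 0)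
      (fun s _ => (hφ s).continuousAt.continuousWithinAt) (fun s _ => (hφ s).hasDerivWithinAt)
      fun s hs => by
        rw [interior_Ici] at hs
        nlinarith [exp_pos (a * s), hu' s hs]
  have ht' := hanti Set.self_mem_Ici ht ht
  simp only [mul_zero, exp_zero, one_mul] at ht'
  linarith [nonpos_of_mul_nonpos_right (ht'.trans (sub_nonpos.mpr h0)) (exp_pos (a * t))]

section Bounds

variable {f : ℕ → ℝ} {γ : ℕ → ℕ → ℝ} {lam : ℝ}

lemma two_mul_sum_cdfF_mul_le (hf : ∀ k, 0 ≤ f k) {n : ℕ} {r : ℕ → ℝ}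
    (hr : ∀ k < n, r k ≤ k) :
    2 * ∑ j ∈ Icc 1 n, cdfF f j * r (n - j) ≤ n * cdfSum f n := by
  refine le_trans ?_ (two_mul_sum_cdfF_mul_sub_le hf n)
  gcongr with j hj
  · exact cdfF_nonneg hf j
  · obtain ⟨hj1, hjn⟩ := mem_Icc.mp hj
    simpa [Nat.cast_sub hjn] using hr (n - j) (by omega)

lemma Rfun_mem_Icc (hf : ∀ k, 0 ≤ f k) (hlam : 0 ≤ lam) (hzero : GammaZeroCase f γ)
    (hrec : GammaRecurrence f γ) (hdiag : GammaDiagonal f γ) (n : ℕ) {t : ℝ} (ht : 0 ≤ t) :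
    Rfun f γ lam t n ∈ Set.Icc 0 (n : ℝ) := by
  induction n using Nat.strong_induction_on generalizing t with
  | _ n ih =>
  have hode := hasDerivAt_Rfun (lam := lam) hf hzero hrec n
  have hconv_nonneg : ∀ s, 0 ≤ s → 0 ≤ ∑ j ∈ Icc 1 n, cdfF f j * Rfun f γ lam s (n - j) :=
    fun s hs => sum_nonneg fun j hj =>
      mul_nonneg (cdfF_nonneg hf j) (ih (n - j) (by have := mem_Icc.mp hj; omega) hs).1
  have hconv_le : ∀ s, 0 ≤ s →
      2 * ∑ j ∈ Icc 1 n, cdfF f j * Rfun f γ lam s (n - j) ≤ n * cdfSum f n :=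
    fun s hs => two_mul_sum_cdfF_mul_le hf fun k hk => (ih k hk hs).2
  constructor
  · have := le_of_hasDerivAt_le_neg_mul_sub (u := fun s => -Rfun f γ lam s n)
      (a := lam * cdfSum f n) (b := 0) (fun s => (hode s).neg) (fun s hs => by
        nlinarith [mul_nonneg hlam (hconv_nonneg s hs.le)]) (by simp [Rfun_time_zero hdiag]) ht
    linarith
  · exact le_of_hasDerivAt_le_neg_mul_sub (u := fun s => Rfun f γ lam s n)
      (a := lam * cdfSum f n) (b := n) hode (fun s hs => by
        nlinarith [mul_le_mul_of_nonneg_left (hconv_le s hs.le) hlam])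
      (Rfun_time_zero hdiag n).le ht

end Bounds

section Increment

variable {f : ℕ → ℝ} {γ : ℕ → ℕ → ℝ} {lam : ℝ}

lemma sum_cdfF_mul_succ_sub (f r : ℕ → ℝ) (n : ℕ) :
    ∑ j ∈ Icc 1 (n + 1), cdfF f j * r (n + 1 - j)
      = ∑ j ∈ Icc 1 n, cdfF f j * r (n - j) + ∑ j ∈ Icc 1 (n + 1), f j * r (n + 1 - j) := by
  simp only [sum_Icc_one_eq_sum_range, Nat.add_sub_add_right, cdfF_succ, add_mul,
    sum_add_distrib, sum_range_succ' (fun j => cdfF f j * r (n - j)), cdfF_zero, zero_mul,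
    add_zero]

lemma Rfun_succ_sub_le_two (hf : ∀ k, 0 ≤ f k) (hlam : 0 ≤ lam) (hzero : GammaZeroCase f γ)
    (hrec : GammaRecurrence f γ) (hdiag : GammaDiagonal f γ) (n : ℕ) {t : ℝ} (ht : 0 ≤ t) :
    Rfun f γ lam t (n + 1) - Rfun f γ lam t n ≤ 2 := by
  have hode := hasDerivAt_Rfun (lam := lam) hf hzero hrec
  refine le_of_hasDerivAt_le_neg_mul_sub (u := fun s => Rfun f γ lam s (n + 1) - Rfun f γ lam s n)
    (a := lam * cdfSum f (n + 1)) (fun s => (hode (n + 1) s).sub (hode n s)) (fun s hs => ?_)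
    (by simp [Rfun_time_zero hdiag]) ht
  have hR := fun k => Rfun_mem_Icc hf hlam hzero hrec hdiag k hs.le
  have hparts := sum_cdfF_mul_succ_sub f (fun k => Rfun f γ lam s k) n
  have hweighted : ∑ j ∈ Icc 1 (n + 1), f j * Rfun f γ lam s (n + 1 - j) ≤ cdfSum f (n + 1) := by
    rw [cdfSum_eq_sum_mul]
    gcongr with j hj
    · exact hf j
    · have := (hR (n + 1 - j)).2
      rw [Nat.cast_sub (mem_Icc.mp hj).2] at this
      push_cast at this ⊢
      linarith
  have key : 2 * ∑ j ∈ Icc 1 (n + 1), f j * Rfun f γ lam s (n + 1 - j)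
      - cdfF f (n + 1) * Rfun f γ lam s n - 2 * cdfSum f (n + 1) ≤ 0 := by
    linarith [mul_nonneg (cdfF_nonneg hf (n + 1)) (hR n).1]
  rw [cdfSum_succ] at key ⊢
  nlinarith [mul_nonpos_of_nonneg_of_nonpos hlam key]

lemma Kfun_sub_one_le_Kfun_succ (hf : ∀ k, 0 ≤ f k) (hlam : 0 ≤ lam)
    (hzero : GammaZeroCase f γ) (hrec : GammaRecurrence f γ) (hdiag : GammaDiagonal f γ)
    (n : ℕ) {t : ℝ} (ht : 0 ≤ t) : Kfun f γ lam t n - 1 ≤ Kfun f γ lam t (n + 1) := by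
  have := Rfun_succ_sub_le_two hf hlam hzero hrec hdiag n ht
  simp only [Kfun, Nat.cast_succ]
  linarith

end Increment

lemma muF_nonneg {f : ℕ → ℝ} (hf : ∀ k, 0 ≤ f k) (m : ℕ) : 0 ≤ muF f m :=
  sum_nonneg fun k _ => mul_nonneg k.cast_nonneg (hf k)

lemma muF_le {f : ℕ → ℝ} {m : ℕ} (hf : ∀ k, 0 ≤ f k) (hf_sum : ∑ k ∈ Icc 1 m, f k = 1) :
    muF f m ≤ m := by
  calc muF f m ≤ ∑ k ∈ Icc 1 m, (m : ℝ) * f k :=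
        sum_le_sum fun k hk => mul_le_mul_of_nonneg_right
          (by exact_mod_cast (mem_Icc.mp hk).2) (hf k)
    _ = m := by rw [← mul_sum, hf_sum, mul_one]

theorem stmt_4_general
    (m : ℕ) (f : ℕ → ℝ)
    (hf_nonneg : ∀ k, 0 ≤ f k)
    (hf_sum : ∑ k ∈ Finset.Icc 1 m, f k = 1)
    (lam : ℝ) (hlam : 0 < lam)
    (γ : ℕ → ℕ → ℝ)
    (hγ_zero : ∀ n j : ℕ, cdfF f n = 0 → 1 ≤ j → j ≤ n → γ n j = 1)
    (hγ_rec : ∀ n i : ℕ, 0 < cdfF f n → 1 ≤ i → i < n →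
      γ n i = 2 * (∑ j ∈ Finset.Icc 1 (n - i), cdfF f j * γ (n - j) i) /
        (∑ k ∈ Finset.Icc (i + 1) n, cdfF f k))
    (hγ_diag : ∀ n : ℕ, 0 < cdfF f n →
      γ n n = (n : ℝ) - ∑ i ∈ Finset.Icc 1 (n - 1), γ n i)
    (t : ℝ) (ht : 0 ≤ t) :
    ∀ n₁ n₂ : ℕ, m ≤ n₁ → n₁ ≤ n₂ →
      Kfun f γ lam t n₁ + (n₁ : ℝ) * ((m : ℝ) + 1) / ((m : ℝ) - muF f m + 1)
        ≤ Kfun f γ lam t n₂ + (n₂ : ℝ) * ((m : ℝ) + 1) / ((m : ℝ) - muF f m + 1) := by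
  intro n₁ n₂ _ hn
  have hμ := muF_le hf_nonneg hf_sum
  have hc : 1 ≤ ((m : ℝ) + 1) / ((m : ℝ) - muF f m + 1) := by
    rw [one_le_div (by linarith)]
    linarith [muF_nonneg hf_nonneg m]
  refine monotone_nat_of_le_succ (f := fun k : ℕ =>
    Kfun f γ lam t k + (k : ℝ) * ((m : ℝ) + 1) / ((m : ℝ) - muF f m + 1)) (fun k => ?_) hn
  have := Kfun_sub_one_le_Kfun_succ hf_nonneg hlam.le hγ_zero hγ_rec hγ_diag k ht
  rw [Nat.cast_succ, add_mul, one_mul, add_div ((k : ℝ) * _)]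
  linarith

/-- For every fixed `t ≥ 0`, `n ↦ K(t,n) + n·(m+1)/(m-μ+1)` is monotonically
increasing in `n` for `n ≥ m`. -/
theorem stmt_4
    (m : ℕ) (hm : 1 ≤ m) (f : ℕ → ℝ)
    (hf_nonneg : ∀ k, 0 ≤ f k)
    (hf_sum : ∑ k ∈ Finset.Icc 1 m, f k = 1)
    (hf_supp : ∀ k : ℕ, k = 0 ∨ m < k → f k = 0)
    (lam : ℝ) (hlam : 0 < lam)
    (γ : ℕ → ℕ → ℝ)
    (hγ_zero : ∀ n j : ℕ, cdfF f n = 0 → 1 ≤ j → j ≤ n → γ n j = 1)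
    (hγ_rec : ∀ n i : ℕ, 0 < cdfF f n → 1 ≤ i → i < n →
      γ n i = 2 * (∑ j ∈ Finset.Icc 1 (n - i), cdfF f j * γ (n - j) i) /
        (∑ k ∈ Finset.Icc (i + 1) n, cdfF f k))
    (hγ_diag : ∀ n : ℕ, 0 < cdfF f n →
      γ n n = (n : ℝ) - ∑ i ∈ Finset.Icc 1 (n - 1), γ n i)
    (t : ℝ) (ht : 0 ≤ t) :
    ∀ n₁ n₂ : ℕ, m ≤ n₁ → n₁ ≤ n₂ →
      Kfun f γ lam t n₁ + (n₁ : ℝ) * ((m : ℝ) + 1) / ((m : ℝ) - muF f m + 1)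
        ≤ Kfun f γ lam t n₂ + (n₂ : ℝ) * ((m : ℝ) + 1) / ((m : ℝ) - muF f m + 1) :=
  stmt_4_general m f hf_nonneg hf_sum lam hlam γ hγ_zero hγ_rec hγ_diag t ht
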